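/- arXiv:1702.01394 — 3 statements merged into one kernel-verified Lean document; each statement's English description precedes it below -/
import Mathlib

section
/- The decision problem ACCEPTS-LONG-SHIFT is decidable: given a finite alphabet Γ, a letter c ∉ Γ, and a deterministic finite automaton M with finite state set over the input alphabet (Γ ∪ {c})², it is decidable whether M accepts a word of the form (x c^n) × (c^n x) for some x ∈ Γ* and some n ≥ |x|. -/
/-!
With `n = |x| + m`, the word `(x c^n) × (c^n x)` reads the letters `[a, c]` of `x`, then
`[c, c]^m`, then the letters `[c, a]` of `x`. Its two copies of `x` are read, together, by a
product automaton with `N²` states, where `N` is the number of states of `M`, so deleting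
a loop of that product run shortens both copies at once and keeps the run accepting.
Pumping the middle block down in the same way, an accepted word of this form exists iff one
exists with `|x| < N²` and `m < N`, a bounded search that is primitive recursive in the
transition table.
-/

/-- Run a DFA presented by its transition table `T` (the entry `T[q][a]` is the state
reached from state `q` on input letter `a`; out-of-range lookups default to state `0`).
States and letters are natural numbers; only finitely many states are ever reachable. -/
def dfaRun (T : List (List ℕ)) : ℕ → List ℕ → ℕ
  | q, [] => q
  | q, a :: w => dfaRun T ((T.getD q []).getD a 0) w

/-- The DFA with transition table `T`, initial state `q0` and list of accepting states `F`
accepts the word `w`. -/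
def dfaAccepts (T : List (List ℕ)) (q0 : ℕ) (F : List ℕ) (w : List ℕ) : Prop :=
  dfaRun T q0 w ∈ F

universe u

namespace DFA

variable {α β σ : Type*}

@[simp]
theorem evalFrom_inter {σ₁ σ₂ : Type u} (M₁ : DFA α σ₁) (M₂ : DFA α σ₂) (s₁ : σ₁) (s₂ : σ₂)
    (x : List α) :
    (M₁.inter M₂).evalFrom (s₁, s₂) x = (M₁.evalFrom s₁ x, M₂.evalFrom s₂ x) := by
  induction x generalizing s₁ s₂ with
  | nil => rfl
  | cons a x ih => exact ih _ _

theorem exists_sublist_length_lt_card_evalFrom_eq [Fintype σ] (M : DFA α σ) (s : σ)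
    (x : List α) :
    ∃ y : List α, y.Sublist x ∧ y.length < Fintype.card σ ∧ M.evalFrom s y = M.evalFrom s x := by
  induction hn : x.length using Nat.strong_induction_on generalizing x with
  | _ n ih =>
  by_cases hlen : x.length < Fintype.card σ
  · exact ⟨x, .refl x, hlen, rfl⟩
  obtain ⟨q, a, b, c, rfl, -, hb, ha, hbq, hc⟩ := M.evalFrom_split (not_lt.1 hlen) rfl
  have hshorter : (a ++ c).length < n := by
    simp only [← hn, List.length_append]
    have := List.length_pos_iff.2 hb
    omega
  obtain ⟨y, hy, hylen, hyeval⟩ := ih _ hshorter (a ++ c) rfl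
  refine ⟨y, hy.trans (List.sublist_append_left a b |>.append_right c), hylen, ?_⟩
  rw [hyeval, evalFrom_of_append, evalFrom_of_append, evalFrom_of_append, ha, hbq, hc]

theorem exists_short_shift_evalFrom_eq [Fintype σ] (M : DFA β σ) (f g : α → β) (c : β)
    (s : σ) (x : List α) (m : ℕ) :
    ∃ y : List α, y.Sublist x ∧ y.length < Fintype.card σ ^ 2 ∧ ∃ m' < Fintype.card σ,
      M.evalFrom s (y.map f ++ List.replicate m' c ++ y.map g) =
        M.evalFrom s (x.map f ++ List.replicate m c ++ x.map g) := by
  obtain ⟨z, hzm, hzlen, hzeval⟩ :=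
    M.exists_sublist_length_lt_card_evalFrom_eq (M.evalFrom s (x.map f)) (List.replicate m c)
  obtain ⟨m', -, rfl⟩ := List.sublist_replicate_iff.1 hzm
  obtain ⟨y, hyx, hylen, hyeval⟩ :=
    ((M.comap f).inter (M.comap g)).exists_sublist_length_lt_card_evalFrom_eq
      (s, M.evalFrom (M.evalFrom s (x.map f)) (List.replicate m c)) x
  simp only [evalFrom_inter, evalFrom_comap, Prod.mk.injEq] at hyeval
  refine ⟨y, hyx, by simpa [sq] using hylen, m', by simpa using hzlen, ?_⟩
  rw [evalFrom_of_append, evalFrom_of_append, hyeval.1, hzeval, hyeval.2, evalFrom_of_append,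
    evalFrom_of_append]

end DFA

namespace List

variable {α β : Type*}

theorem zipWith_replicate_length_right (f : α → α → β) (c : α) (x : List α) :
    zipWith f x (replicate x.length c) = x.map (f · c) := by
  induction x with
  | nil => rfl
  | cons a x ih => simp [replicate_succ, ih]

theorem zipWith_replicate_length_left (f : α → α → β) (c : α) (x : List α) :
    zipWith f (replicate x.length c) x = x.map (f c) := by
  induction x with
  | nil => rfl
  | cons a x ih => simp [replicate_succ, ih]

theorem zipWith_append_replicate_replicate_append (f : α → α → β) (c : α) (x : List α)
    (m : ℕ) :
    zipWith f (x ++ replicate (x.length + m) c) (replicate (x.length + m) c ++ x) =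
      x.map (f · c) ++ replicate m (f c c) ++ x.map (f c) := by
  have hleft : x ++ replicate (x.length + m) c = x ++ (replicate m c ++ replicate x.length c) := by
    rw [← replicate_add, Nat.add_comm]
  have hright : replicate (x.length + m) c ++ x = replicate x.length c ++ (replicate m c ++ x) := by
    rw [replicate_add, append_assoc]
  rw [hleft, hright, zipWith_append (by simp), zipWith_append (by simp),
    zipWith_replicate_length_right, zipWith_replicate, min_self, zipWith_replicate_length_left,
    append_assoc]

def wordsUpTo (A : List α) (L : ℕ) : List (List α) :=
  (fun W => [] :: A.flatMap fun a => W.map (a :: ·))^[L] [[]]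

theorem mem_wordsUpTo {A : List α} {L : ℕ} {x : List α} :
    x ∈ wordsUpTo A L ↔ x.length ≤ L ∧ ∀ a ∈ x, a ∈ A := by
  induction L generalizing x with
  | zero =>
    simp only [wordsUpTo, Function.iterate_zero, id, mem_singleton, Nat.le_zero, length_eq_zero_iff]
    constructor
    · rintro rfl
      simp
    · exact And.left
  | succ L ih =>
    rw [wordsUpTo, Function.iterate_succ_apply', ← wordsUpTo]
    cases x with
    | nil => simp
    | cons b x => simp [ih, and_comm, and_left_comm]

end List

section Primrec

open Primrec

variable {α β : Type*} [Primcodable α] [Primcodable β]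

theorem PrimrecPred.exists_mem {f : α → List β} {p : α → β → Prop} (hf : Primrec f)
    (hp : PrimrecRel p) : PrimrecPred fun a => ∃ b ∈ f a, p a b :=
  (PrimrecRel.exists_mem_list hp.swap).comp hf .id

theorem Primrec.list_replicate : Primrec₂ (List.replicate : ℕ → α → List α) :=
  (nat_iterate fst (const []) (list_cons.comp₂ (snd.comp₂ .left) .right)).of_eq fun p => by
    induction p.1 with
    | zero => rfl
    | succ n ih => rw [Function.iterate_succ_apply', ih, List.replicate_succ]

theorem Primrec.list_wordsUpTo : Primrec₂ (List.wordsUpTo : List α → ℕ → List (List α)) := by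
  have hcons : Primrec₂ fun (q : (List α × List (List α)) × α) (w : List α) => q.2 :: w :=
    list_cons.comp₂ (snd.comp₂ .left) .right
  have hstep : Primrec₂ fun (A : List α) (W : List (List α)) =>
      [] :: A.flatMap fun a => W.map (a :: ·) :=
    list_cons.comp (const []) (list_flatMap fst (list_map (snd.comp fst) hcons).to₂)
  exact nat_iterate snd (const [[]]) (hstep.comp₂ (fst.comp₂ .left) .right) |>.of_eq
    fun _ => rfl

end Primrec

namespace AcceptsLongShift

open Primrec

theorem lookup_le_sum_flatten (T : List (List ℕ)) (q a : ℕ) :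
    (T.getD q []).getD a 0 ≤ T.flatten.sum := by
  rw [List.getD_eq_getElem?_getD]
  cases h : (T.getD q [])[a]? with
  | none => exact Nat.zero_le _
  | some r =>
    refine List.le_sum_of_mem (List.mem_flatten.2 ⟨T.getD q [], ?_, List.mem_of_getElem? h⟩)
    rw [List.getD_eq_getElem?_getD]
    cases hq : T[q]? with
    | none => simp [hq] at h
    | some l => exact List.mem_of_getElem? hq

def stateBound (T : List (List ℕ)) (q0 : ℕ) : ℕ := q0 + T.flatten.sum + 1

def tableDFA (T : List (List ℕ)) (q0 : ℕ) (F : List ℕ) : DFA ℕ (Fin (stateBound T q0)) where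
  step q a := ⟨(T.getD q []).getD a 0, by
    have := lookup_le_sum_flatten T q a
    unfold stateBound
    omega⟩
  start := ⟨q0, by unfold stateBound; omega⟩
  accept := {q | (q : ℕ) ∈ F}

theorem tableDFA_evalFrom (T : List (List ℕ)) (q0 : ℕ) (F : List ℕ)
    (q : Fin (stateBound T q0)) (w : List ℕ) :
    ((tableDFA T q0 F).evalFrom q w : ℕ) = dfaRun T q w := by
  induction w generalizing q with
  | nil => rfl
  | cons a w ih => exact ih _

theorem dfaAccepts_iff_mem_accepts (T : List (List ℕ)) (q0 : ℕ) (F : List ℕ) (w : List ℕ) :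
    dfaAccepts T q0 F w ↔ w ∈ (tableDFA T q0 F).accepts := by
  change _ ↔ ((tableDFA T q0 F).evalFrom (tableDFA T q0 F).start w : ℕ) ∈ F
  rw [tableDFA_evalFrom]
  rfl

/-- The word `(x c^(|x| + m)) × (c^(|x| + m) x)` with `c = 0` and `[i, j]` encoded as
`Nat.pair i j`. -/
def shiftWord (x : List ℕ) (m : ℕ) : List ℕ :=
  x.map (Nat.pair · 0) ++ List.replicate m (Nat.pair 0 0) ++ x.map (Nat.pair 0)

def letters (k : ℕ) : List ℕ := (List.range k).map Nat.succ

theorem mem_letters {k a : ℕ} : a ∈ letters k ↔ 1 ≤ a ∧ a ≤ k := by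
  simp only [letters, List.mem_map, List.mem_range]
  constructor
  · rintro ⟨b, hb, rfl⟩
    omega
  · intro h
    exact ⟨a - 1, by omega, by omega⟩

theorem exists_shiftWord_iff (k : ℕ) (T : List (List ℕ)) (q0 : ℕ) (F : List ℕ) :
    (∃ (x : List ℕ) (n : ℕ), x.length ≤ n ∧ (∀ a ∈ x, 1 ≤ a ∧ a ≤ k) ∧
        dfaAccepts T q0 F
          (List.zipWith Nat.pair (x ++ List.replicate n 0) (List.replicate n 0 ++ x))) ↔
      ∃ (x : List ℕ) (m : ℕ), (∀ a ∈ x, a ∈ letters k) ∧ dfaAccepts T q0 F (shiftWord x m) := by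
  simp only [mem_letters]
  constructor
  · rintro ⟨x, n, hn, hx, hacc⟩
    obtain ⟨m, rfl⟩ := Nat.exists_eq_add_of_le hn
    exact ⟨x, m, hx, by rwa [List.zipWith_append_replicate_replicate_append] at hacc⟩
  · rintro ⟨x, m, hx, hacc⟩
    exact ⟨x, x.length + m, by omega, hx,
      by rwa [List.zipWith_append_replicate_replicate_append]⟩

theorem exists_shiftWord_iff_bounded (k : ℕ) (T : List (List ℕ)) (q0 : ℕ) (F : List ℕ) :
    (∃ (x : List ℕ) (m : ℕ), (∀ a ∈ x, a ∈ letters k) ∧ dfaAccepts T q0 F (shiftWord x m)) ↔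
      ∃ x ∈ List.wordsUpTo (letters k) (stateBound T q0 ^ 2),
        ∃ m ∈ List.range (stateBound T q0), dfaAccepts T q0 F (shiftWord x m) := by
  simp only [List.mem_wordsUpTo, List.mem_range]
  constructor
  · rintro ⟨x, m, hx, hacc⟩
    obtain ⟨y, hyx, hy, m', hm', heq⟩ :=
      (tableDFA T q0 F).exists_short_shift_evalFrom_eq (Nat.pair · 0) (Nat.pair 0)
        (Nat.pair 0 0) (tableDFA T q0 F).start x m
    rw [Fintype.card_fin] at hy hm'
    refine ⟨y, ⟨hy.le, fun a ha => hx a (hyx.subset ha)⟩, m', hm', ?_⟩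
    rw [dfaAccepts_iff_mem_accepts, DFA.mem_accepts, DFA.eval, shiftWord, heq]
    rwa [dfaAccepts_iff_mem_accepts] at hacc
  · rintro ⟨x, ⟨-, hx⟩, m, -, hacc⟩
    exact ⟨x, m, hx, hacc⟩

theorem dfaRun_eq_foldl (T : List (List ℕ)) (q : ℕ) (w : List ℕ) :
    dfaRun T q w = w.foldl (fun q a => (T.getD q []).getD a 0) q := by
  induction w generalizing q with
  | nil => rfl
  | cons a w ih => exact ih _

theorem primrec_dfaRun : Primrec fun p : List (List ℕ) × ℕ × List ℕ => dfaRun p.1 p.2.1 p.2.2 :=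
  (list_foldl (snd.comp snd) (fst.comp snd)
      ((list_getD 0).comp ((list_getD []).comp (fst.comp fst) (fst.comp snd))
        (snd.comp snd)).to₂).of_eq
    fun p => (dfaRun_eq_foldl p.1 p.2.1 p.2.2).symm

theorem primrec_shiftWord : Primrec₂ shiftWord :=
  list_append.comp
    (list_append.comp (list_map fst (Primrec₂.natPair.comp snd (const 0)).to₂)
      (list_replicate.comp snd (const _)))
    (list_map fst (Primrec₂.natPair.comp (const 0) snd).to₂)

theorem primrec_stateBound : Primrec₂ stateBound :=
  succ.comp (nat_add.comp snd
    ((list_foldr (list_flatten.comp fst) (const 0) (nat_add.comp (fst.comp snd)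
      (snd.comp snd)).to₂).of_eq fun _ => List.sum_eq_foldr.symm))

theorem primrec_letters : Primrec letters :=
  list_map list_range (succ.comp snd).to₂

theorem primrecPred_dfaAccepts :
    PrimrecPred fun p : (List (List ℕ) × ℕ × List ℕ) × List ℕ =>
      dfaAccepts p.1.1 p.1.2.1 p.1.2.2 p.2 :=
  have hrun : Primrec fun p : (List (List ℕ) × ℕ × List ℕ) × List ℕ =>
      dfaRun p.1.1 p.1.2.1 p.2 :=
    primrec_dfaRun.comp ((fst.comp fst).pair ((fst.comp (snd.comp fst)).pair snd))
  (PrimrecPred.exists_mem (p := fun p s => s = dfaRun p.1.1 p.1.2.1 p.2)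
    (snd.comp (snd.comp fst)) (Primrec.eq.comp snd (hrun.comp fst))).of_eq
    fun _ => by simp [dfaAccepts]

theorem primrecPred_boundedSearch :
    PrimrecPred fun p : ℕ × List (List ℕ) × ℕ × List ℕ =>
      ∃ x ∈ List.wordsUpTo (letters p.1) (stateBound p.2.1 p.2.2.1 ^ 2),
        ∃ m ∈ List.range (stateBound p.2.1 p.2.2.1),
          dfaAccepts p.2.1 p.2.2.1 p.2.2.2 (shiftWord x m) := by
  have hN : Primrec fun p : ℕ × List (List ℕ) × ℕ × List ℕ => stateBound p.2.1 p.2.2.1 :=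
    primrec_stateBound.comp (fst.comp snd) (fst.comp (snd.comp snd))
  have hwords : Primrec fun p : ℕ × List (List ℕ) × ℕ × List ℕ =>
      List.wordsUpTo (letters p.1) (stateBound p.2.1 p.2.2.1 ^ 2) :=
    list_wordsUpTo.comp (primrec_letters.comp fst)
      ((nat_mul.comp hN hN).of_eq fun _ => (sq _).symm)
  exact PrimrecPred.exists_mem hwords <| PrimrecPred.exists_mem (list_range.comp (hN.comp fst)) <|
    primrecPred_dfaAccepts.comp
      ((snd.comp (fst.comp fst)).pair (primrec_shiftWord.comp (snd.comp fst) snd))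

end AcceptsLongShift

/-- **ACCEPTS-LONG-SHIFT is decidable.**  An instance is an alphabet size `k` (so
`Γ = {1, …, k}` and the extra letter `c` is `0`) together with a DFA `(T, q0, F)` over the
input alphabet `(Γ ∪ {c})²`, where the pair letter `[i, j]` is encoded as `Nat.pair i j`.
There is a total computable function deciding whether the DFA accepts a word of the form
`(x c^n) × (c^n x)` with `x ∈ Γ*` and `n ≥ |x|`. -/
theorem acceptsLongShift_decidable :
    ∃ f : ℕ × List (List ℕ) × ℕ × List ℕ → Bool, Computable f ∧
      ∀ (k : ℕ) (T : List (List ℕ)) (q0 : ℕ) (F : List ℕ),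
        (f (k, T, q0, F) = true ↔
          ∃ (x : List ℕ) (n : ℕ), x.length ≤ n ∧ (∀ a ∈ x, 1 ≤ a ∧ a ≤ k) ∧
            dfaAccepts T q0 F
              (List.zipWith Nat.pair (x ++ List.replicate n 0)
                (List.replicate n 0 ++ x))) := by
  obtain ⟨_, hdecide⟩ := AcceptsLongShift.primrecPred_boundedSearch
  refine ⟨_, hdecide.to_comp, fun k T q0 F => ?_⟩
  rw [decide_eq_true_iff, AcceptsLongShift.exists_shiftWord_iff,
    AcceptsLongShift.exists_shiftWord_iff_bounded]
end

section
/- The decision problem ACCEPTS-DISTINCT-CONJUGATES is decidable: given a deterministic finite automaton M with finite state set over a finite alphabet Σ, it is decidable whether there exist words u, v ∈ Σ* such that uv ∈ L(M), vu ∈ L(M), and uv ≠ vu. -/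
section

variable {α β γ : Type*}

def RespectsAppend (φ : List α → β) : Prop :=
  ∀ x y z, φ x = φ y → φ (x ++ z) = φ (y ++ z)

namespace RespectsAppend

variable {φ : List α → β} {ψ : List α → γ}

theorem prodMk (hφ : RespectsAppend φ) (hψ : RespectsAppend ψ) :
    RespectsAppend fun x => (φ x, ψ x) := fun x y z h =>
  Prod.ext (hφ x y z (congrArg Prod.fst h)) (hψ x y z (congrArg Prod.snd h))

theorem apply_take_append_drop (hφ : RespectsAppend φ) {w : List α} {i j : ℕ}
    (h : φ (w.take i) = φ (w.take j)) : φ (w.take i ++ w.drop j) = φ w := by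
  rw [hφ _ _ _ h, List.take_append_drop]

theorem exists_sublist_length_lt (hφ : RespectsAppend φ) {S : Finset β} (hS : ∀ x, φ x ∈ S)
    (w : List α) : ∃ w', w'.Sublist w ∧ w'.length < S.card ∧ φ w' = φ w := by
  induction hw : w.length using Nat.strong_induction_on generalizing w with
  | _ L ih =>
    by_cases hL : L < S.card
    · exact ⟨w, .refl w, hw ▸ hL, rfl⟩
    have hcut : ∃ i j, i < j ∧ j ≤ L ∧ φ (w.take i) = φ (w.take j) := by
      obtain ⟨i, hi, j, hj, hij, h⟩ := Finset.exists_ne_map_eq_of_card_lt_of_maps_to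
        (s := Finset.range (L + 1)) (f := fun i => φ (w.take i)) (by rw [Finset.card_range]; omega)
        (fun i _ => hS _)
      simp only [Finset.mem_range] at hi hj
      rcases Nat.lt_or_gt_of_ne hij with hlt | hlt
      exacts [⟨i, j, hlt, by omega, h⟩, ⟨j, i, hlt, by omega, h.symm⟩]
    obtain ⟨i, j, hij, hjL, h⟩ := hcut
    obtain ⟨w', hw', hlen, hφw'⟩ := ih (w.take i ++ w.drop j).length
      (by simp only [List.length_append, List.length_take, List.length_drop]; omega) _ rfl
    refine ⟨w', hw'.trans ?_, hlen, hφw'.trans (hφ.apply_take_append_drop h)⟩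
    conv_rhs => rw [← List.take_append_drop j w]
    exact (List.take_sublist_take_left hij.le).append (.refl _)

end RespectsAppend

theorem respectsAppend_isEmpty : RespectsAppend (List.isEmpty : List α → Bool) := by
  intro x y z h
  cases x <;> cases y <;> cases z <;> simp_all

namespace List

def pow (g : List α) (n : ℕ) : List α := (replicate n g).flatten

section pow

variable {g x y : List α} {m n : ℕ}

theorem pow_zero (g : List α) : g.pow 0 = [] := rfl

theorem pow_succ (g : List α) (n : ℕ) : g.pow (n + 1) = g ++ g.pow n := rfl

theorem pow_add (g : List α) (m n : ℕ) : g.pow (m + n) = g.pow m ++ g.pow n := by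
  rw [pow, pow, pow, replicate_add, flatten_append]

theorem length_pow (g : List α) (n : ℕ) : (g.pow n).length = n * g.length := by
  simp [pow, length_flatten]

theorem pow_append_pow_comm (g : List α) (m n : ℕ) : g.pow m ++ g.pow n = g.pow n ++ g.pow m := by
  rw [← pow_add, ← pow_add, Nat.add_comm]

theorem pow_prefix_pow (g : List α) (h : m ≤ n) : g.pow m <+: g.pow n := by
  obtain ⟨k, rfl⟩ := Nat.exists_eq_add_of_le h
  rw [pow_add]
  exact prefix_append _ _

theorem append_pow_comm (h : x ++ y = y ++ x) (n : ℕ) : x ++ y.pow n = y.pow n ++ x := by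
  induction n with
  | zero => simp [pow_zero]
  | succ n ih => rw [pow_succ, ← append_assoc, h, append_assoc, ih, append_assoc]

theorem prefix_pow_of_append_comm (hy : y ≠ []) (h : x ++ y = y ++ x) : x <+: y.pow x.length := by
  have hlen : x.length ≤ (y.pow x.length).length := by
    rw [length_pow]
    exact Nat.le_mul_of_pos_right _ (length_pos_iff.mpr hy)
  refine prefix_of_prefix_length_le ?_ (prefix_append _ x) hlen
  rw [← append_pow_comm h]
  exact prefix_append _ _

end pow

/-- `g` is the shortest nonempty word commuting with `y`. -/
theorem exists_append_comm_iff_eq_pow {y : List α} (hy : y ≠ []) :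
    ∃ g : List α, g ≠ [] ∧ g.length ≤ y.length ∧
      ∀ x, x ++ y = y ++ x ↔ ∃ n, x = g.pow n := by
  classical
  have hP : ∃ m, ∃ g : List α, g ≠ [] ∧ g ++ y = y ++ g ∧ g.length = m :=
    ⟨_, y, hy, rfl, rfl⟩
  obtain ⟨g, hg, hgy, hglen⟩ := Nat.find_spec hP
  have hmin : ∀ x : List α, x ≠ [] → x ++ y = y ++ x → g.length ≤ x.length := fun x hx hxy =>
    hglen ▸ Nat.find_min' hP ⟨x, hx, hxy, rfl⟩
  refine ⟨g, hg, hmin y hy rfl, fun x => ⟨fun hxy => ?_, ?_⟩⟩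
  · induction hx : x.length using Nat.strong_induction_on generalizing x with
    | _ L ih =>
      rcases eq_or_ne x [] with rfl | hx0
      · exact ⟨0, rfl⟩
      have hgx : g <+: x := prefix_of_prefix_length_le
        ((prefix_pow_of_append_comm hy hgy).trans (pow_prefix_pow y (hmin x hx0 hxy)))
        (prefix_pow_of_append_comm hy hxy) (hmin x hx0 hxy)
      obtain ⟨x', rfl⟩ := hgx
      have hx'y : x' ++ y = y ++ x' := by
        apply append_cancel_left (as := g)
        rw [← append_assoc, hxy, ← append_assoc, ← hgy, append_assoc]
      obtain ⟨n, rfl⟩ := ih x'.length (by simp [← hx, length_pos_iff.mpr hg]) x' hx'y rfl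
      exact ⟨n + 1, rfl⟩
  · rintro ⟨n, rfl⟩
    exact (append_pow_comm hgy.symm n).symm

theorem append_comm_trans {x y z : List α} (hy : y ≠ []) (hx : x ++ y = y ++ x)
    (hz : z ++ y = y ++ z) : x ++ z = z ++ x := by
  obtain ⟨g, -, -, hg⟩ := exists_append_comm_iff_eq_pow hy
  obtain ⟨m, rfl⟩ := (hg x).mp hx
  obtain ⟨n, rfl⟩ := (hg z).mp hz
  exact pow_append_pow_comm g m n

section phase

variable {g x w : List α}

theorem eq_pow_append_take_of_prefix_pow (hg : g ≠ []) {n : ℕ} (h : x <+: g.pow n) :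
    x = g.pow (x.length / g.length) ++ g.take (x.length % g.length) := by
  set q := x.length / g.length
  have hx : x <+: g.pow q ++ (g ++ g.pow n) := by
    rw [← pow_succ, ← pow_add]
    exact h.trans (pow_prefix_pow g ((Nat.le_succ n).trans (Nat.le_add_left _ q)))
  have hlen : x.length = (g.pow q).length + x.length % g.length := by
    rw [length_pow, Nat.div_add_mod']
  rw [prefix_iff_eq_take, hlen, take_length_add_append,
    take_append_of_le_length (Nat.mod_lt _ (length_pos_iff.mpr hg)).le] at hx
  exact hx

theorem exists_pow_append_prefix_pow_iff (m : ℕ) :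
    (∃ n, g.pow m ++ w <+: g.pow n) ↔ ∃ n, w <+: g.pow n := by
  constructor
  · rintro ⟨n, h⟩
    refine ⟨n, (prefix_append_right_inj (g.pow m)).mp ?_⟩
    rw [← pow_add]
    exact h.trans (pow_prefix_pow g (Nat.le_add_left n m))
  · rintro ⟨n, h⟩
    exact ⟨m + n, by rw [pow_add]; exact (prefix_append_right_inj _).mpr h⟩

open Classical in
/-- The phase of `x` along the infinite word `g g g ⋯`: `none` if `x` is not a prefix of it,
and otherwise the position at which `x` ends inside the current copy of `g`. -/
noncomputable def powPhase (g x : List α) : Option ℕ :=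
  if ∃ n, x <+: g.pow n then some (x.length % g.length) else none

theorem powPhase_mem (hg : g ≠ []) (x : List α) :
    powPhase g x ∈ insert none ((Finset.range g.length).image some) := by
  unfold powPhase
  split_ifs
  · simp [Nat.mod_lt _ (length_pos_iff.mpr hg)]
  · simp

theorem powPhase_eq_some_zero_iff (hg : g ≠ []) : powPhase g x = some 0 ↔ ∃ n, x = g.pow n := by
  constructor
  · intro h
    unfold powPhase at h
    split_ifs at h with hx
    obtain ⟨n, hn⟩ := hx
    refine ⟨x.length / g.length, (eq_pow_append_take_of_prefix_pow hg hn).trans ?_⟩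
    rw [Option.some_inj.mp h, take_zero, append_nil]
  · rintro ⟨n, rfl⟩
    rw [powPhase, if_pos ⟨n, prefix_rfl⟩, length_pow, Nat.mul_mod_left]

theorem respectsAppend_powPhase {g : List α} (hg : g ≠ []) : RespectsAppend (powPhase g) := by
  intro x y z h
  unfold powPhase at h ⊢
  by_cases hx : ∃ n, x <+: g.pow n <;> by_cases hy : ∃ n, y <+: g.pow n <;>
    simp only [hx, hy, if_true, if_false, reduceCtorEq, Option.some_inj] at h
  · obtain ⟨_, hx⟩ := hx
    obtain ⟨_, hy⟩ := hy
    have hpre : (∃ n, x ++ z <+: g.pow n) ↔ ∃ n, y ++ z <+: g.pow n := by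
      rw [eq_pow_append_take_of_prefix_pow hg hx, eq_pow_append_take_of_prefix_pow hg hy, h,
        append_assoc, append_assoc, exists_pow_append_prefix_pow_iff,
        exists_pow_append_prefix_pow_iff]
    have hmod : (x ++ z).length % g.length = (y ++ z).length % g.length := by
      rw [length_append, length_append, Nat.add_mod, h, ← Nat.add_mod]
    rw [hpre, hmod]
  · have hxz : ¬∃ n, x ++ z <+: g.pow n := fun ⟨n, hn⟩ => hx ⟨n, (prefix_append x z).trans hn⟩
    have hyz : ¬∃ n, y ++ z <+: g.pow n := fun ⟨n, hn⟩ => hy ⟨n, (prefix_append y z).trans hn⟩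
    rw [if_neg hxz, if_neg hyz]

end phase

end List

namespace DFA

variable {σ : Type*} (M : DFA α σ)

theorem respectsAppend_evalFrom (s : σ) : RespectsAppend (M.evalFrom s) := fun x y z h => by
  rw [evalFrom_of_append, evalFrom_of_append, h]

theorem append_mem_accepts_of_eval_eq {u v u' v' : List α} (hu : M.eval u' = M.eval u)
    (hv : M.evalFrom (M.eval u) v' = M.evalFrom (M.eval u) v) (h : u ++ v ∈ M.accepts) :
    u' ++ v' ∈ M.accepts := by
  rw [mem_accepts, eval, evalFrom_of_append, ← eval] at h ⊢
  rwa [hu, hv]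

variable [Fintype σ]

theorem exists_sublist_evalFrom_eq {τ : List α → β} (hτ : RespectsAppend τ) {S : Finset β}
    (hS : ∀ x, τ x ∈ S) (r : σ) (u : List α) :
    ∃ u', u'.Sublist u ∧ u'.length < Fintype.card σ ^ 2 * S.card ∧
      M.eval u' = M.eval u ∧ M.evalFrom r u' = M.evalFrom r u ∧ τ u' = τ u := by
  obtain ⟨u', hu', hlen, h⟩ :=
    (((M.respectsAppend_evalFrom M.start).prodMk (M.respectsAppend_evalFrom r)).prodMk hτ)
      |>.exists_sublist_length_lt (S := (Finset.univ ×ˢ Finset.univ) ×ˢ S)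
        (fun x => by simp [hS]) u
  simp only [Prod.mk.injEq] at h
  refine ⟨u', hu', ?_, h.1.1, h.1.2, h.2⟩
  simpa [Finset.card_product, sq] using hlen

theorem exists_sublist_ne_nil {r : σ} {u : List α} (hu : u ≠ []) :
    ∃ u', u'.Sublist u ∧ u' ≠ [] ∧ u'.length < 2 * Fintype.card σ ^ 2 ∧
      M.eval u' = M.eval u ∧ M.evalFrom r u' = M.evalFrom r u := by
  obtain ⟨u', hu', hlen, h₁, h₂, hempty⟩ :=
    M.exists_sublist_evalFrom_eq respectsAppend_isEmpty (fun _ => Finset.mem_univ _) r u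
  refine ⟨u', hu', ?_, by simpa [Nat.mul_comm] using hlen, h₁, h₂⟩
  rintro rfl
  exact hu (List.isEmpty_iff.mp hempty.symm)

theorem exists_sublist_not_append_comm {r : σ} {u y : List α} (hy : y ≠ [])
    (h : u ++ y ≠ y ++ u) :
    ∃ u', u'.Sublist u ∧ u'.length < Fintype.card σ ^ 2 * (y.length + 1) ∧
      M.eval u' = M.eval u ∧ M.evalFrom r u' = M.evalFrom r u ∧ u' ++ y ≠ y ++ u' := by
  obtain ⟨g, hg, hgy, hcomm⟩ := List.exists_append_comm_iff_eq_pow hy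
  obtain ⟨u', hu', hlen, h₁, h₂, hphase⟩ :=
    M.exists_sublist_evalFrom_eq (List.respectsAppend_powPhase hg) (List.powPhase_mem hg) r u
  refine ⟨u', hu', hlen.trans_le ?_, h₁, h₂, ?_⟩
  · refine Nat.mul_le_mul_left _ ((Finset.card_insert_le _ _).trans ?_)
    simpa using (Finset.card_image_le.trans (Finset.card_range _).le).trans hgy
  · rwa [Ne, hcomm, ← List.powPhase_eq_some_zero_iff hg, hphase, List.powPhase_eq_some_zero_iff hg,
      ← hcomm]

theorem exists_short_distinct_conjugates {u v : List α} (huv : u ++ v ∈ M.accepts)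
    (hvu : v ++ u ∈ M.accepts) (hne : u ++ v ≠ v ++ u) :
    ∃ u' v', u'.Sublist u ∧ v'.Sublist v ∧
      u'.length < 2 * Fintype.card σ ^ 4 ∧ v'.length < 2 * Fintype.card σ ^ 4 ∧
      u' ++ v' ≠ v' ++ u' ∧ u' ++ v' ∈ M.accepts ∧ v' ++ u' ∈ M.accepts := by
  have hu : u ≠ [] := by rintro rfl; simp at hne
  have hv : v ≠ [] := by rintro rfl; simp at hne
  obtain ⟨u₀, hu₀, hu₀ne, hu₀len, hu₀₁, hu₀₂⟩ := M.exists_sublist_ne_nil (r := M.eval v) hu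
  obtain ⟨v₀, hv₀, hv₀ne, hv₀len, hv₀₁, hv₀₂⟩ := M.exists_sublist_ne_nil (r := M.eval u) hv
  set n := Fintype.card σ
  have accepts : ∀ {u' v'}, M.eval u' = M.eval u →
      M.evalFrom (M.eval v) u' = M.evalFrom (M.eval v) u → M.eval v' = M.eval v →
      M.evalFrom (M.eval u) v' = M.evalFrom (M.eval u) v →
      u' ++ v' ∈ M.accepts ∧ v' ++ u' ∈ M.accepts := fun hu₁ hu₂ hv₁ hv₂ =>
    ⟨M.append_mem_accepts_of_eval_eq hu₁ hv₂ huv, M.append_mem_accepts_of_eval_eq hv₁ hu₂ hvu⟩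
  have hsq : 2 * n ^ 2 ≤ 2 * n ^ 4 := by
    calc 2 * n ^ 2 ≤ 2 * (n ^ 2 * n ^ 2) := Nat.mul_le_mul_left _ (Nat.le_mul_self _)
      _ = 2 * n ^ 4 := by ring
  have hquad : ∀ m, m < 2 * n ^ 2 → n ^ 2 * (m + 1) ≤ 2 * n ^ 4 := fun m hm => by
    calc n ^ 2 * (m + 1) ≤ n ^ 2 * (2 * n ^ 2) := Nat.mul_le_mul_left _ hm
      _ = 2 * n ^ 4 := by ring
  by_cases h₀ : u₀ ++ v₀ = v₀ ++ u₀
  swap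
  · exact ⟨u₀, v₀, hu₀, hv₀, by omega, by omega, h₀, accepts hu₀₁ hu₀₂ hv₀₁ hv₀₂⟩
  by_cases huv₀ : u ++ v₀ = v₀ ++ u
  swap
  · obtain ⟨u', hu', hlen, hu'₁, hu'₂, hne'⟩ :=
      M.exists_sublist_not_append_comm (r := M.eval v) hv₀ne huv₀
    exact ⟨u', v₀, hu', hv₀, hlen.trans_le (hquad _ hv₀len), by omega, hne',
      accepts hu'₁ hu'₂ hv₀₁ hv₀₂⟩
  by_cases hvu₀ : v ++ u₀ = u₀ ++ v
  swap
  · obtain ⟨v', hv', hlen, hv'₁, hv'₂, hne'⟩ :=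
      M.exists_sublist_not_append_comm (r := M.eval u) hu₀ne hvu₀
    exact ⟨u₀, v', hu₀, hv', by omega, hlen.trans_le (hquad _ hu₀len), Ne.symm hne',
      accepts hu₀₁ hu₀₂ hv'₁ hv'₂⟩
  exact absurd (List.append_comm_trans hu₀ne (List.append_comm_trans hv₀ne huv₀ h₀) hvu₀) hne

end DFA

end

def dfaStates (T : List (List ℕ)) (q0 : ℕ) : Finset ℕ := insert q0 (insert 0 T.flatten.toFinset)

theorem getD_getD_mem_dfaStates (T : List (List ℕ)) (q0 q a : ℕ) :
    (T.getD q []).getD a 0 ∈ dfaStates T q0 := by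
  simp only [dfaStates, Finset.mem_insert, List.mem_toFinset, List.getD_eq_getElem?_getD]
  rcases hrow : T[q]? with _ | row
  · simp
  simp only [Option.getD_some]
  rcases ha : row[a]? with _ | b
  · simp
  simp only [Option.getD_some]
  exact .inr (.inr (List.mem_flatten.mpr ⟨row, List.mem_of_getElem? hrow, List.mem_of_getElem? ha⟩))

theorem card_dfaStates_le (T : List (List ℕ)) (q0 : ℕ) :
    (dfaStates T q0).card ≤ T.flatten.length + 2 :=
  (Finset.card_insert_le _ _).trans <| Nat.succ_le_succ <|
    (Finset.card_insert_le _ _).trans <| Nat.succ_le_succ T.flatten.toFinset_card_le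

def toDFA (T : List (List ℕ)) (q0 : ℕ) (F : List ℕ) : DFA ℕ (dfaStates T q0) where
  step q a := ⟨(T.getD q []).getD a 0, getD_getD_mem_dfaStates T q0 q a⟩
  start := ⟨q0, Finset.mem_insert_self _ _⟩
  accept := {q | q.1 ∈ F}

theorem toDFA_evalFrom (T : List (List ℕ)) (q0 : ℕ) (F : List ℕ) (q : dfaStates T q0)
    (w : List ℕ) : ((toDFA T q0 F).evalFrom q w : ℕ) = dfaRun T q w := by
  induction w generalizing q with
  | nil => rfl
  | cons a w ih => exact ih _

theorem dfaAccepts_iff_mem_accepts {T : List (List ℕ)} {q0 : ℕ} {F w : List ℕ} :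
    dfaAccepts T q0 F w ↔ w ∈ (toDFA T q0 F).accepts := by
  change dfaRun T q0 w ∈ F ↔ ((toDFA T q0 F).evalFrom (toDFA T q0 F).start w : ℕ) ∈ F
  rw [toDFA_evalFrom]
  rfl

theorem dfaRun_eq_foldl (T : List (List ℕ)) (q : ℕ) (w : List ℕ) :
    dfaRun T q w = w.foldl (fun q a => (T.getD q []).getD a 0) q := by
  induction w generalizing q with
  | nil => rfl
  | cons a w ih => exact ih _

def words (k : ℕ) : ℕ → List (List ℕ)
  | 0 => [[]]
  | B + 1 => [] :: (List.range k).flatMap fun a => (words k B).map (a :: ·)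

theorem mem_words {k B : ℕ} {w : List ℕ} : w ∈ words k B ↔ w.length ≤ B ∧ ∀ a ∈ w, a < k := by
  induction B generalizing w with
  | zero => cases w <;> simp [words]
  | succ B ih =>
    cases w with
    | nil => simp [words]
    | cons a w => simp [words, ih, and_left_comm]

open Primrec in
theorem primrec_words : Primrec₂ words := by
  have hstep : Primrec₂ fun (p : ℕ × ℕ) (W : ℕ × List (List ℕ)) =>
      ([] : List ℕ) :: (List.range p.1).flatMap fun a => W.2.map (a :: ·) :=
    list_cons.comp₂ (const []) <| list_flatMap (list_range.comp (fst.comp fst)) <|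
      list_map (snd.comp (snd.comp fst)) (list_cons.comp₂ (snd.comp fst) snd)
  refine (nat_rec' snd (const [[]]) hstep).of_eq fun ⟨k, B⟩ => ?_
  induction B with
  | zero => rfl
  | succ B ih => simp only [words, ← ih]

open Primrec in
theorem primrec_dfaRun :
    Primrec fun p : List (List ℕ) × ℕ × List ℕ => dfaRun p.1 p.2.1 p.2.2 := by
  have hstep : Primrec₂ fun (p : List (List ℕ) × ℕ × List ℕ) (qa : ℕ × ℕ) =>
      (p.1.getD qa.1 []).getD qa.2 0 :=
    (list_getD 0).comp₂ ((list_getD []).comp₂ (fst.comp fst) (fst.comp snd)) (snd.comp snd)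
  exact (list_foldl (snd.comp snd) (fst.comp snd) hstep).of_eq fun p =>
    (dfaRun_eq_foldl _ _ _).symm

theorem primrecRel_list_mem {α : Type*} [Primcodable α] [DecidableEq α] :
    PrimrecRel fun (a : α) (l : List α) => a ∈ l :=
  (Primrec.eq.exists_mem_list.comp Primrec.snd Primrec.fst).of_eq fun _ => by simp

def searchBound (T : List (List ℕ)) : ℕ := 2 * (T.flatten.length + 2) ^ 4

open Primrec in
theorem primrec_searchBound : Primrec searchBound := by
  have hN : Primrec fun T : List (List ℕ) => T.flatten.length + 2 :=
    nat_add.comp (list_length.comp list_flatten) (const 2)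
  have hsq := nat_mul.comp hN hN
  exact (nat_mul.comp (const 2) (nat_mul.comp hsq hsq)).of_eq fun T => by
    simp only [searchBound]; ring

def HasShortWitness (k : ℕ) (T : List (List ℕ)) (q0 : ℕ) (F : List ℕ) : Prop :=
  ∃ u ∈ words k (searchBound T), ∃ v ∈ words k (searchBound T),
    dfaAccepts T q0 F (u ++ v) ∧ dfaAccepts T q0 F (v ++ u) ∧ u ++ v ≠ v ++ u

open Primrec in
theorem primrecPred_hasShortWitness :
    PrimrecPred fun x : ℕ × List (List ℕ) × ℕ × List ℕ =>
      HasShortWitness x.1 x.2.1 x.2.2.1 x.2.2.2 := by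
  have hacc : PrimrecRel fun (x : ℕ × List (List ℕ) × ℕ × List ℕ) (w : List ℕ) =>
      dfaAccepts x.2.1 x.2.2.1 x.2.2.2 w :=
    primrecRel_list_mem.comp
      (primrec_dfaRun.comp <|
        (fst.comp (snd.comp fst)).pair ((fst.comp (snd.comp (snd.comp fst))).pair snd))
      (snd.comp (snd.comp (snd.comp fst)))
  have hconj : PrimrecRel fun (v : List ℕ) (p : (ℕ × List (List ℕ) × ℕ × List ℕ) × List ℕ) =>
      dfaAccepts p.1.2.1 p.1.2.2.1 p.1.2.2.2 (p.2 ++ v) ∧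
        dfaAccepts p.1.2.1 p.1.2.2.1 p.1.2.2.2 (v ++ p.2) ∧ p.2 ++ v ≠ v ++ p.2 :=
    (hacc.comp (fst.comp snd) (list_append.comp (snd.comp snd) fst)).and <|
      (hacc.comp (fst.comp snd) (list_append.comp fst (snd.comp snd))).and <|
        (Primrec.eq.comp (list_append.comp (snd.comp snd) fst)
          (list_append.comp fst (snd.comp snd))).not
  have hW : Primrec fun x : ℕ × List (List ℕ) × ℕ × List ℕ => words x.1 (searchBound x.2.1) :=
    primrec_words.comp fst (primrec_searchBound.comp (fst.comp snd))
  have hinner : PrimrecRel fun (u : List ℕ) (x : ℕ × List (List ℕ) × ℕ × List ℕ) =>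
      ∃ v ∈ words x.1 (searchBound x.2.1), dfaAccepts x.2.1 x.2.2.1 x.2.2.2 (u ++ v) ∧
        dfaAccepts x.2.1 x.2.2.1 x.2.2.2 (v ++ u) ∧ u ++ v ≠ v ++ u :=
    hconj.exists_mem_list.comp (hW.comp snd) (snd.pair fst)
  exact hinner.exists_mem_list.comp hW Primrec.id

theorem hasShortWitness_iff {k : ℕ} {T : List (List ℕ)} {q0 : ℕ} {F : List ℕ} :
    HasShortWitness k T q0 F ↔ ∃ u v : List ℕ, (∀ a ∈ u ++ v, a < k) ∧
      dfaAccepts T q0 F (u ++ v) ∧ dfaAccepts T q0 F (v ++ u) ∧ u ++ v ≠ v ++ u := by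
  constructor
  · rintro ⟨u, hu, v, hv, h⟩
    refine ⟨u, v, fun a ha => ?_, h⟩
    rcases List.mem_append.mp ha with ha | ha
    exacts [(mem_words.mp hu).2 a ha, (mem_words.mp hv).2 a ha]
  · rintro ⟨u, v, hk, huv, hvu, hne⟩
    rw [dfaAccepts_iff_mem_accepts] at huv hvu
    obtain ⟨u', v', hu', hv', hlu, hlv, hne', huv', hvu'⟩ :=
      (toDFA T q0 F).exists_short_distinct_conjugates huv hvu hne
    have hB : 2 * Fintype.card (dfaStates T q0) ^ 4 ≤ searchBound T := by
      rw [Fintype.card_coe]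
      exact Nat.mul_le_mul_left 2 (Nat.pow_le_pow_left (card_dfaStates_le T q0) 4)
    refine ⟨u', mem_words.mpr ⟨by omega, fun a ha => hk a (List.mem_append_left _ (hu'.subset ha))⟩,
      v', mem_words.mpr ⟨by omega, fun a ha => hk a (List.mem_append_right _ (hv'.subset ha))⟩,
      dfaAccepts_iff_mem_accepts.mpr huv', dfaAccepts_iff_mem_accepts.mpr hvu', hne'⟩

/-- **ACCEPTS-DISTINCT-CONJUGATES is decidable.**  An instance is an alphabet size `k`
(so `Σ = {0, …, k-1}`) together with a DFA `(T, q0, F)` over `Σ`.  There is a total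
computable function deciding whether the DFA accepts two distinct conjugates `uv ≠ vu`. -/
theorem acceptsDistinctConjugates_decidable :
    ∃ f : ℕ × List (List ℕ) × ℕ × List ℕ → Bool, Computable f ∧
      ∀ (k : ℕ) (T : List (List ℕ)) (q0 : ℕ) (F : List ℕ),
        (f (k, T, q0, F) = true ↔
          ∃ u v : List ℕ, (∀ a ∈ u ++ v, a < k) ∧
            dfaAccepts T q0 F (u ++ v) ∧ dfaAccepts T q0 F (v ++ u) ∧
            u ++ v ≠ v ++ u) := by
  obtain ⟨_, hdec⟩ := primrecPred_hasShortWitness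
  exact ⟨_, hdec.to_comp, fun k T q0 F => decide_eq_true_iff.trans hasShortWitness_iff⟩
end

section
/- Let S be a length-preserving rewriting system over a finite alphabet Σ with a, b ∈ Σ, let d ∉ Σ and c ∉ Σ ∪ {d} be new letters, and set Γ = Σ ∪ {d}. Define the languages over (Γ ∪ {c})²: E = { [e,e] : e ∈ Σ }, R = { r × ℓ : (ℓ → r) ∈ S }, and L = [d,c] ([a,c])⁺ [d,d] ( E* R E* [d,d] )* ([c,b])⁺ [c,d]. Then for all integers n ≥ 2: a^{n−1} ⟹*_S b^{n−1} if and only if L contains a word of the form (x c^n) × (c^n x) for some x ∈ Γ*. -/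
open Computability

/-!
A witness is `x = d w₀ d w₁ d ⋯ d wₖ d` with `w₀ = a^{n-1} ⟹ w₁ ⟹ ⋯ ⟹ wₖ = b^{n-1}`. The two
tracks of `(x c^n) × (c^n x)` are shifted by `n = |wᵢ| + 1` letters, so the block between two
consecutive `[d,d]` reads `w_{i+1}` over `wᵢ`, and it lies in `E* R E*` exactly when
`wᵢ ⟹_S w_{i+1}`. After the first `i` blocks what is left is `(s c^n) × (wᵢ d s)` for the rest `s`
of `x`. Conversely, as `c, d ∉ Σ`, the first `d` of the lower track and the first `c` of the upper
one determine how such a word splits, so the blocks can be peeled off one at a time.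
-/

/-- One rewriting step of the rewriting system `S`: `u ⟹_S v` iff some rule `(ℓ, r) ∈ S`
applies, i.e. `u = α ++ ℓ ++ β` and `v = α ++ r ++ β`. -/
def RewriteStep {α : Type*} (S : List (List α × List α)) (u v : List α) : Prop :=
  ∃ p ∈ S, ∃ x y : List α, u = x ++ p.1 ++ y ∧ v = x ++ p.2 ++ y

open List Relation

namespace List

variable {α β : Type*}

theorem zip_inj {l₁ l₁' : List α} {l₂ l₂' : List β} (h : l₁.length = l₂.length)
    (h' : l₁'.length = l₂'.length) (heq : zip l₁ l₂ = zip l₁' l₂') : l₁ = l₁' ∧ l₂ = l₂' :=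
  ⟨by simpa [map_fst_zip h.le, map_fst_zip h'.le] using congrArg (map Prod.fst) heq,
    by simpa [map_snd_zip h.ge, map_snd_zip h'.ge] using congrArg (map Prod.snd) heq⟩

theorem append_cons_inj_of_notMem_left {x₁ x₂ z₁ z₂ : List α} {a : α}
    (h₁ : a ∉ x₁) (h₂ : a ∉ x₂) (h : x₁ ++ a :: z₁ = x₂ ++ a :: z₂) : x₁ = x₂ ∧ z₁ = z₂ := by
  induction x₁ generalizing x₂ with
  | nil =>
    cases x₂ with
    | nil => simpa using h
    | cons b x₂ =>
      simp only [nil_append, cons_append, cons.injEq] at h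
      exact absurd (h.1 ▸ mem_cons_self) h₂
  | cons b x₁ ih =>
    cases x₂ with
    | nil =>
      simp only [nil_append, cons_append, cons.injEq] at h
      exact absurd (h.1 ▸ mem_cons_self) h₁
    | cons b' x₂ =>
      simp only [cons_append, cons.injEq] at h
      obtain ⟨rfl, h⟩ := h
      simpa using ih (fun h => h₁ (mem_cons_of_mem _ h)) (fun h => h₂ (mem_cons_of_mem _ h)) h

theorem eq_append_of_append_replicate_eq_append {s v r : List α} {c : α} {k : ℕ}
    (h : s ++ replicate k c = v ++ r) (hv : c ∉ v) :
    ∃ s', s = v ++ s' ∧ r = s' ++ replicate k c := by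
  rcases append_eq_append_iff.mp h with ⟨_ | ⟨g, t⟩, hvs, hrep⟩ | ⟨s', hs, hr⟩
  · exact ⟨[], by simpa using hvs.symm, by simpa using hrep.symm⟩
  · have hg : g = c := eq_of_mem_replicate (hrep ▸ mem_append_left _ mem_cons_self)
    exact absurd (hvs ▸ by simp [hg]) hv
  · exact ⟨s', hs, hr⟩

end List

namespace Language

variable {α : Type*}

theorem mem_kstar_iff_forall_of_letters {l : Language α} {P : α → Prop}
    (hl : ∀ w, w ∈ l ↔ ∃ a, P a ∧ w = [a]) {w : List α} : w ∈ l∗ ↔ ∀ a ∈ w, P a := by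
  constructor
  · rintro ⟨L, rfl, hL⟩ a ha
    obtain ⟨y, hy, hay⟩ := mem_flatten.mp ha
    obtain ⟨b, hb, rfl⟩ := (hl y).mp (hL y hy)
    exact (mem_singleton.mp hay) ▸ hb
  · intro hw
    refine mem_kstar.mpr ⟨w.map fun a => [a], by simp [← flatMap_def], ?_⟩
    simp only [mem_map, forall_exists_index, and_imp]
    rintro _ a ha rfl
    exact (hl _).mpr ⟨a, hw a ha, rfl⟩

theorem mem_singleton_mul_kstar_iff {q : α} {w : List α} :
    w ∈ ({[q]} : Language α) * {[q]}∗ ↔ ∃ k, w = replicate (k + 1) q := by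
  have hstar : ∀ y, y ∈ ({[q]} : Language α)∗ ↔ ∀ a ∈ y, a = q :=
    fun y => mem_kstar_iff_forall_of_letters fun _ => Set.mem_singleton_iff.trans (by simp)
  constructor
  · rintro ⟨_, rfl, y, hy, rfl⟩
    exact ⟨y.length, by rw [replicate_succ, ← eq_replicate_iff.mpr ⟨rfl, (hstar y).mp hy⟩]; rfl⟩
  · rintro ⟨k, rfl⟩
    exact mem_mul.mpr ⟨[q], rfl, replicate k q, (hstar _).mpr fun _ => eq_of_mem_replicate, rfl⟩

theorem append_mem_kstar_mul {l m : Language α} {x y : List α} (hx : x ∈ l)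
    (hy : y ∈ l∗ * m) : x ++ y ∈ l∗ * m := by
  obtain ⟨y₁, ⟨L, rfl, hL⟩, y₂, hy₂, rfl⟩ := hy
  refine mem_mul.mpr ⟨x ++ L.flatten, mem_kstar.mpr ⟨x :: L, rfl, ?_⟩, y₂, hy₂, by simp⟩
  simpa [hx] using hL

end Language

section ShiftEncoding

variable {α : Type*} {S : List (List α × List α)} {Sig : Set α}

theorem RewriteStep.length_eq (hlen : ∀ p ∈ S, p.1.length = p.2.length) {u v : List α}
    (h : RewriteStep S u v) : v.length = u.length := by
  obtain ⟨p, hp, x, y, rfl, rfl⟩ := h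
  simp [hlen p hp]

theorem RewriteStep.forall_mem (hSig : ∀ p ∈ S, ∀ g ∈ p.2, g ∈ Sig) {u v : List α}
    (h : RewriteStep S u v) (hu : ∀ g ∈ u, g ∈ Sig) : ∀ g ∈ v, g ∈ Sig := by
  obtain ⟨p, hp, x, y, rfl, rfl⟩ := h
  simp only [mem_append] at hu ⊢
  rintro g ((hg | hg) | hg)
  · exact hu g (.inl (.inl hg))
  · exact hSig p hp g hg
  · exact hu g (.inr hg)

def diagLang (Sig : Set α) : Language (α × α) :=
  {w | ∃ e ∈ Sig, w = [(e, e)]}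

def ruleLang (S : List (List α × List α)) : Language (α × α) :=
  {w | ∃ p ∈ S, w = zip p.2 p.1}

def stepLang (Sig : Set α) (S : List (List α × List α)) : Language (α × α) :=
  (diagLang Sig)∗ * ruleLang S * (diagLang Sig)∗

def tailLang (Sig : Set α) (S : List (List α × List α)) (b c d : α) : Language (α × α) :=
  (stepLang Sig S * {[(d, d)]})∗ * ({[(c, b)]} * {[(c, b)]}∗ * {[(c, d)]})

def shiftLang (Sig : Set α) (S : List (List α × List α)) (a b c d : α) : Language (α × α) :=
  {[(d, c)]} * ({[(a, c)]} * {[(a, c)]}∗) * {[(d, d)]} *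
    ((diagLang Sig)∗ * ruleLang S * (diagLang Sig)∗ * {[(d, d)]})∗ *
    ({[(c, b)]} * {[(c, b)]}∗) * {[(c, d)]}

theorem mem_diagLang_kstar_iff {z : List (α × α)} :
    z ∈ (diagLang Sig)∗ ↔ ∃ u, (∀ e ∈ u, e ∈ Sig) ∧ z = zip u u := by
  have hletter : ∀ w, w ∈ diagLang Sig ↔ ∃ p, (∃ e ∈ Sig, p = (e, e)) ∧ w = [p] := fun w => by
    constructor
    · rintro ⟨e, he, rfl⟩
      exact ⟨_, ⟨e, he, rfl⟩, rfl⟩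
    · rintro ⟨_, ⟨e, he, rfl⟩, rfl⟩
      exact ⟨e, he, rfl⟩
  rw [Language.mem_kstar_iff_forall_of_letters hletter]
  constructor
  · intro hz
    refine ⟨z.map Prod.fst, ?_, zip_of_prod rfl (map_congr_left fun p hp => ?_)⟩
    · simp only [mem_map, forall_exists_index, and_imp]
      rintro _ p hp rfl
      obtain ⟨e, he, rfl⟩ := hz p hp
      exact he
    · obtain ⟨e, -, rfl⟩ := hz p hp
      rfl
  · rintro ⟨u, hu, rfl⟩ p hp
    rw [show zip u u = u.map fun e => (e, e) by simpa using zip_map' (l := u) (f := id) (g := id),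
      mem_map] at hp
    obtain ⟨e, he, rfl⟩ := hp
    exact ⟨e, hu e he, rfl⟩

theorem zip_append_append_self {x y r l : List α} (h : r.length = l.length) :
    zip (x ++ r ++ y) (x ++ l ++ y) = zip x x ++ zip r l ++ zip y y := by
  rw [zip_append (by simp [h]), zip_append rfl]

theorem zip_mem_stepLang (hlen : ∀ p ∈ S, p.1.length = p.2.length) {u v : List α}
    (hu : ∀ g ∈ u, g ∈ Sig) (h : RewriteStep S u v) : zip v u ∈ stepLang Sig S := by
  obtain ⟨p, hp, x, y, rfl, rfl⟩ := h
  rw [zip_append_append_self (hlen p hp).symm]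
  have hdiag : ∀ t, (∀ g ∈ t, g ∈ Sig) → zip t t ∈ (diagLang Sig)∗ :=
    fun t ht => mem_diagLang_kstar_iff.mpr ⟨t, ht, rfl⟩
  exact Language.append_mem_mul (Language.append_mem_mul
    (hdiag x fun g hg => hu g (by simp [hg])) ⟨p, hp, rfl⟩)
    (hdiag y fun g hg => hu g (by simp [hg]))

theorem exists_rewriteStep_of_mem_stepLang (hlen : ∀ p ∈ S, p.1.length = p.2.length)
    (hSig : ∀ p ∈ S, ∀ g ∈ p.1, g ∈ Sig) {z : List (α × α)} (hz : z ∈ stepLang Sig S) :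
    ∃ u v, (∀ g ∈ u, g ∈ Sig) ∧ RewriteStep S u v ∧ z = zip v u := by
  obtain ⟨_, ⟨ex, hex, _, ⟨p, hp, rfl⟩, rfl⟩, ey, hey, rfl⟩ := hz
  obtain ⟨x, hx, rfl⟩ := mem_diagLang_kstar_iff.mp hex
  obtain ⟨y, hy, rfl⟩ := mem_diagLang_kstar_iff.mp hey
  refine ⟨x ++ p.1 ++ y, x ++ p.2 ++ y, ?_, ⟨p, hp, x, y, rfl, rfl⟩,
    (zip_append_append_self (hlen p hp).symm).symm⟩
  simp only [mem_append]
  rintro g ((hg | hg) | hg)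
  exacts [hx g hg, hSig p hp g hg, hy g hg]

theorem mem_plus_mul_singleton_iff_eq_zip {b c d : α} {f : List (α × α)} :
    f ∈ ({[(c, b)]} : Language (α × α)) * {[(c, b)]}∗ * {[(c, d)]} ↔
      ∃ k, f = zip (replicate (k + 2) c) (replicate (k + 1) b ++ [d]) := by
  have hzip : ∀ k, zip (replicate (k + 2) c) (replicate (k + 1) b ++ [d]) =
      replicate (k + 1) (c, b) ++ [(c, d)] := fun k => by
    rw [replicate_succ' (n := k + 1), zip_append (by simp), zip_replicate']
    rfl
  simp only [hzip]
  constructor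
  · rintro ⟨y, hy, _, rfl, rfl⟩
    obtain ⟨k, rfl⟩ := Language.mem_singleton_mul_kstar_iff.mp hy
    exact ⟨k, rfl⟩
  · rintro ⟨k, rfl⟩
    exact Language.append_mem_mul (Language.mem_singleton_mul_kstar_iff.mpr ⟨k, rfl⟩) rfl

theorem zip_shift_eq_append_cons {c d : α} (hcd : c ≠ d) {k : ℕ} {w u v s : List α}
    {rest : List (α × α)} (hw : d ∉ w) (hu : d ∉ u) (hv : c ∉ v) (huv : v.length = u.length)
    (h : zip (s ++ replicate k c) (w ++ d :: s) = zip v u ++ (d, d) :: rest) :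
    w = u ∧ ∃ s', s = v ++ d :: s' ∧ rest = zip (s' ++ replicate k c) (v ++ d :: s') := by
  obtain ⟨v', xs, u', zs, hlen, h₁, h₂, hvu, hrest⟩ := zip_eq_append_iff.mp h
  obtain ⟨rfl, rfl⟩ := zip_inj huv hlen hvu
  obtain ⟨xs, zs, rfl, rfl, rfl⟩ := zip_eq_cons_iff.mp hrest.symm
  obtain ⟨rfl, rfl⟩ := append_cons_inj_of_notMem_left hw hu h₂
  obtain ⟨s', rfl, rfl⟩ := eq_append_of_append_replicate_eq_append (v := v ++ [d])
    (by simpa using h₁) (by simp [hv, hcd])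
  exact ⟨rfl, s', by simp, by simp⟩

theorem exists_zip_shift_mem_tailLang (hlen : ∀ p ∈ S, p.1.length = p.2.length)
    (hSig : ∀ p ∈ S, ∀ g ∈ p.2, g ∈ Sig) {b c d : α} {m : ℕ} (hm : m ≠ 0) {w : List α}
    (h : ReflTransGen (RewriteStep S) w (replicate m b)) (hw : ∀ g ∈ w, g ∈ Sig)
    (hwm : w.length = m) :
    ∃ s, (∀ g ∈ s, g ∈ Sig ∨ g = d) ∧
      zip (s ++ replicate (m + 1) c) (w ++ d :: s) ∈ tailLang Sig S b c d := by
  induction h using ReflTransGen.head_induction_on with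
  | refl =>
    obtain ⟨k, rfl⟩ := Nat.exists_eq_succ_of_ne_zero hm
    exact ⟨[], by simp, Language.append_mem_mul (Language.nil_mem_kstar _)
      (mem_plus_mul_singleton_iff_eq_zip.mpr ⟨k, rfl⟩)⟩
  | @head w w' hstep _ ih =>
    have hw' := hstep.forall_mem hSig hw
    have hww' := hstep.length_eq hlen
    obtain ⟨s, hs, hmem⟩ := ih hw' (hww'.trans hwm)
    refine ⟨w' ++ d :: s, ?_, ?_⟩
    · simp only [mem_append, mem_cons]
      rintro g (hg | rfl | hg)
      exacts [.inl (hw' g hg), .inr rfl, hs g hg]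
    · have hsplit : zip (w' ++ d :: s ++ replicate (m + 1) c) (w ++ d :: (w' ++ d :: s)) =
          (zip w' w ++ [(d, d)]) ++ zip (s ++ replicate (m + 1) c) (w' ++ d :: s) := by
        rw [append_assoc, cons_append, zip_append hww', zip_cons_cons]
        simp
      rw [hsplit]
      exact Language.append_mem_kstar_mul
        (Language.append_mem_mul (zip_mem_stepLang hlen hw hstep) rfl) hmem

theorem reflTransGen_of_zip_shift_mem_tailLang (hlen : ∀ p ∈ S, p.1.length = p.2.length)
    (hSig : ∀ p ∈ S, (∀ g ∈ p.1, g ∈ Sig) ∧ ∀ g ∈ p.2, g ∈ Sig) {b c d : α} (hb : b ∈ Sig)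
    (hd : d ∉ Sig) (hc : c ∉ Sig) (hcd : c ≠ d) {m : ℕ} {w s : List α}
    (hw : ∀ g ∈ w, g ∈ Sig) (hwm : w.length = m)
    (h : zip (s ++ replicate (m + 1) c) (w ++ d :: s) ∈ tailLang Sig S b c d) :
    ReflTransGen (RewriteStep S) w (replicate m b) := by
  obtain ⟨_, ⟨blocks, rfl, hblocks⟩, f, hf, hzip⟩ := h
  induction blocks generalizing w s with
  | nil =>
    obtain ⟨k, rfl⟩ := mem_plus_mul_singleton_iff_eq_zip.mp hf
    have hlen_shift : (s ++ replicate (m + 1) c).length = (w ++ d :: s).length := by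
      simp only [length_append, length_replicate, length_cons, hwm]
      omega
    obtain ⟨-, hsnd⟩ := zip_inj (by simp) hlen_shift hzip
    obtain ⟨rfl, -⟩ := append_cons_inj_of_notMem_left (fun h => hd (hw d h))
      (fun h => hd (eq_of_mem_replicate h ▸ hb)) hsnd.symm
    subst hwm
    rw [length_replicate]
  | cons block blocks ih =>
    obtain ⟨_, hstepz, _, rfl, rfl⟩ := hblocks block mem_cons_self
    obtain ⟨u, v, hu, hstep, rfl⟩ :=
      exists_rewriteStep_of_mem_stepLang hlen (fun p hp => (hSig p hp).1) hstepz
    have hv := hstep.forall_mem (fun p hp => (hSig p hp).2) hu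
    have hvu := hstep.length_eq hlen
    have hzip' : zip (s ++ replicate (m + 1) c) (w ++ d :: s) =
        zip v u ++ (d, d) :: (blocks.flatten ++ f) := by
      rw [← hzip]
      simp
    obtain ⟨rfl, s', rfl, hrest⟩ := zip_shift_eq_append_cons hcd (fun h => hd (hw d h))
      (fun h => hd (hu d h)) (fun h => hc (hv c h)) hvu hzip'
    exact .head hstep (ih hv (hvu.trans hwm) (fun b hb => hblocks b (mem_cons_of_mem _ hb)) hrest)

theorem shiftLang_eq (a b c d : α) :
    shiftLang Sig S a b c d =
      {[(d, c)]} * ({[(a, c)]} * {[(a, c)]}∗) * {[(d, d)]} * tailLang Sig S b c d := by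
  simp only [shiftLang, tailLang, stepLang, mul_assoc]

theorem zip_shift_mem_shiftLang_iff {a b c d : α} (hac : a ≠ c) (hcd : c ≠ d) {m : ℕ}
    (hm : m ≠ 0) {x : List α} :
    zip (x ++ replicate (m + 1) c) (replicate (m + 1) c ++ x) ∈ shiftLang Sig S a b c d ↔
      ∃ s, x = d :: (replicate m a ++ d :: s) ∧
        zip (s ++ replicate (m + 1) c) (replicate m a ++ d :: s) ∈ tailLang Sig S b c d := by
  rw [shiftLang_eq]
  constructor
  · rintro ⟨_, ⟨_, ⟨_, rfl, _, hplus, rfl⟩, _, rfl, rfl⟩, t, ht, hzip⟩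
    obtain ⟨k, rfl⟩ := Language.mem_singleton_mul_kstar_iff.mp hplus
    cases x with
    | nil =>
      rw [nil_append, append_nil, zip_replicate'] at hzip
      have hdc : (d, c) ∈ replicate (m + 1) (c, c) := hzip ▸ by simp
      exact absurd (congrArg Prod.fst (eq_of_mem_replicate hdc)).symm hcd
    | cons g x =>
      rw [cons_append, show replicate (m + 1) c ++ g :: x = c :: (replicate m c ++ g :: x) by rfl,
        zip_cons_cons] at hzip
      simp only [append_assoc, cons_append, nil_append, cons.injEq,
        Prod.mk.injEq] at hzip
      obtain ⟨⟨rfl, -⟩, hzip⟩ := hzip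
      have hzip' : zip (x ++ replicate (m + 1) c) (replicate m c ++ d :: x) =
          zip (replicate (k + 1) a) (replicate (k + 1) c) ++ (d, d) :: t := by
        rw [zip_replicate', hzip]
      have hdc : ∀ n, d ∉ replicate n c := fun _ h => hcd (eq_of_mem_replicate h).symm
      obtain ⟨hmk, s, rfl, rfl⟩ := zip_shift_eq_append_cons hcd (hdc m) (hdc (k + 1))
        (fun h => hac (eq_of_mem_replicate h).symm) (by simp) hzip'
      obtain rfl : m = k + 1 := by simpa using congrArg length hmk
      exact ⟨s, rfl, ht⟩
  · rintro ⟨s, rfl, ht⟩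
    obtain ⟨k, rfl⟩ := Nat.exists_eq_succ_of_ne_zero hm
    have hsplit : zip (d :: (replicate (k + 1) a ++ d :: s) ++ replicate (k + 2) c)
        (replicate (k + 2) c ++ d :: (replicate (k + 1) a ++ d :: s)) =
        [(d, c)] ++ replicate (k + 1) (a, c) ++ [(d, d)] ++
          zip (s ++ replicate (k + 2) c) (replicate (k + 1) a ++ d :: s) := by
      rw [replicate_succ (n := k + 1)]
      simp [zip_append]
    rw [hsplit]
    exact Language.append_mem_mul (Language.append_mem_mul (Language.append_mem_mul rfl
      (Language.mem_singleton_mul_kstar_iff.mpr ⟨k, rfl⟩)) rfl) ht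

end ShiftEncoding

theorem rewrite_power_iff_accepts_shift_general {Ω : Type*}
    (Sig : Set Ω) (a b d c : Ω)
    (ha : a ∈ Sig) (hb : b ∈ Sig) (hd : d ∉ Sig) (hc : c ∉ Sig) (hcd : c ≠ d)
    (S : List (List Ω × List Ω))
    (hSalph : ∀ p ∈ S, (∀ g ∈ p.1, g ∈ Sig) ∧ (∀ g ∈ p.2, g ∈ Sig))
    (hSlen : ∀ p ∈ S, p.1.length = p.2.length)
    (E R L : Language (Ω × Ω))
    (hE : E = {w | ∃ e ∈ Sig, w = [(e, e)]})
    (hR : R = {w | ∃ p ∈ S, w = List.zipWith Prod.mk p.2 p.1})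
    (hL : L = ({[(d, c)]} : Language (Ω × Ω)) *
        (({[(a, c)]} : Language (Ω × Ω)) * ({[(a, c)]} : Language (Ω × Ω))∗) *
        ({[(d, d)]} : Language (Ω × Ω)) *
        ((E∗ * R * E∗) * ({[(d, d)]} : Language (Ω × Ω)))∗ *
        (({[(c, b)]} : Language (Ω × Ω)) * ({[(c, b)]} : Language (Ω × Ω))∗) *
        ({[(c, d)]} : Language (Ω × Ω))) :
    ∀ n : ℕ, 2 ≤ n →
      (Relation.ReflTransGen (RewriteStep S)
          (List.replicate (n - 1) a) (List.replicate (n - 1) b) ↔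
        ∃ x : List Ω, (∀ g ∈ x, g ∈ Sig ∨ g = d) ∧
          List.zipWith Prod.mk (x ++ List.replicate n c) (List.replicate n c ++ x) ∈ L) := by
  intro n hn
  obtain ⟨m, rfl⟩ : ∃ m, n = m + 1 := ⟨n - 1, by omega⟩
  have hm : m ≠ 0 := by omega
  subst hE hR hL
  have haSig : ∀ g ∈ replicate m a, g ∈ Sig := fun g hg => eq_of_mem_replicate hg ▸ ha
  have hac : a ≠ c := fun h => hc (h ▸ ha)
  rw [Nat.add_sub_cancel]
  constructor
  · intro h
    obtain ⟨s, hs, hmem⟩ := exists_zip_shift_mem_tailLang (c := c) (d := d) hSlen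
      (fun p hp => (hSalph p hp).2) hm h haSig length_replicate
    refine ⟨d :: (replicate m a ++ d :: s), ?_,
      (zip_shift_mem_shiftLang_iff hac hcd hm).mpr ⟨s, rfl, hmem⟩⟩
    simp only [mem_cons, mem_append]
    rintro g (rfl | hg | rfl | hg)
    exacts [.inr rfl, .inl (haSig g hg), .inr rfl, hs g hg]
  · rintro ⟨x, -, hx⟩
    obtain ⟨s, rfl, hmem⟩ := (zip_shift_mem_shiftLang_iff hac hcd hm).mp hx
    exact reflTransGen_of_zip_shift_mem_tailLang hSlen hSalph hb hd hc hcd haSig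
      length_replicate hmem

/-- Let `S` be a length-preserving rewriting system over a finite alphabet `Σ ∋ a, b`,
let `d ∉ Σ` and `c ∉ Σ ∪ {d}` be new letters, and let `Γ = Σ ∪ {d}`.  With
`E = { [e,e] : e ∈ Σ }`, `R = { r × ℓ : (ℓ → r) ∈ S }` and
`L = [d,c] ([a,c])⁺ [d,d] (E* R E* [d,d])* ([c,b])⁺ [c,d]` (products of words being
pointwise zips), we have, for every `n ≥ 2`:  `a^{n-1} ⟹*_S b^{n-1}` iff `L` contains a
word of the form `(x c^n) × (c^n x)` for some `x ∈ Γ*`. -/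
theorem rewrite_power_iff_accepts_shift {Ω : Type*} [Fintype Ω]
    (Sig : Set Ω) (a b d c : Ω)
    (ha : a ∈ Sig) (hb : b ∈ Sig) (hd : d ∉ Sig) (hc : c ∉ Sig) (hcd : c ≠ d)
    (S : List (List Ω × List Ω))
    (hSalph : ∀ p ∈ S, (∀ g ∈ p.1, g ∈ Sig) ∧ (∀ g ∈ p.2, g ∈ Sig))
    (hSlen : ∀ p ∈ S, p.1.length = p.2.length)
    (E R L : Language (Ω × Ω))
    (hE : E = {w | ∃ e ∈ Sig, w = [(e, e)]})
    (hR : R = {w | ∃ p ∈ S, w = List.zipWith Prod.mk p.2 p.1})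
    (hL : L = ({[(d, c)]} : Language (Ω × Ω)) *
        (({[(a, c)]} : Language (Ω × Ω)) * ({[(a, c)]} : Language (Ω × Ω))∗) *
        ({[(d, d)]} : Language (Ω × Ω)) *
        ((E∗ * R * E∗) * ({[(d, d)]} : Language (Ω × Ω)))∗ *
        (({[(c, b)]} : Language (Ω × Ω)) * ({[(c, b)]} : Language (Ω × Ω))∗) *
        ({[(c, d)]} : Language (Ω × Ω))) :
    ∀ n : ℕ, 2 ≤ n →
      (Relation.ReflTransGen (RewriteStep S)
          (List.replicate (n - 1) a) (List.replicate (n - 1) b) ↔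
        ∃ x : List Ω, (∀ g ∈ x, g ∈ Sig ∨ g = d) ∧
          List.zipWith Prod.mk (x ++ List.replicate n c) (List.replicate n c ++ x) ∈ L) :=
  rewrite_power_iff_accepts_shift_general Sig a b d c ha hb hd hc hcd S hSalph hSlen E R L hE hR hL
end
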